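/- Let 0 < r ≤ 1/4 and let X_1, …, X_n be i.i.d. uniform on Q_1 ∪ Q_2. Set ε = r/2 and form the graph G on vertex set {1,…,n} with an edge between i ≠ j if and only if |X_i − X_j| ≤ ε. Then with probability at least 1 − (8/r)·exp(−n r / 8), the sets S_1 = {i : X_i ∈ Q_1} and S_2 = {i : X_i ∈ Q_2} are both nonempty, there are no edges between S_1 and S_2, and each of S_1 and S_2 induces a connected subgraph of G; that is, S_1 and S_2 are exactly the connected components of G. -/

import Mathlib

open MeasureTheory ProbabilityTheory

/-- The left cluster `Q₁ = [0, 1/2 - r]`. -/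
def Q1 (r : ℝ) : Set ℝ := Set.Icc 0 (1 / 2 - r)

/-- The right cluster `Q₂ = [1/2 + r, 1]`. -/
def Q2 (r : ℝ) : Set ℝ := Set.Icc (1 / 2 + r) 1

/-- The uniform distribution on `Q₁ ∪ Q₂`, with density `1/(1-2r)` there. -/
noncomputable def unifQ (r : ℝ) : Measure ℝ :=
  ENNReal.ofReal (1 / (1 - 2 * r)) • (volume.restrict (Q1 r ∪ Q2 r))

/-- The ε-neighborhood graph on points `x₁,…,xₙ ∈ ℝ`: `i ~ j` iff `i ≠ j` and `|xᵢ - xⱼ| ≤ ε`. -/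
def nbhdGraph (n : ℕ) (x : Fin n → ℝ) (ε : ℝ) : SimpleGraph (Fin n) where
  Adj i j := i ≠ j ∧ |x i - x j| ≤ ε
  symm := by
    refine ⟨?_⟩
    intro i j h
    exact ⟨h.1.symm, by rw [abs_sub_comm]; exact h.2⟩
  loopless := by
    refine ⟨?_⟩
    intro i h
    exact h.1 rfl

set_option maxHeartbeats 1000000

lemma connected_of_hits (n : ℕ) (x : Fin n → ℝ) (ε a b L : ℝ) (m : ℕ)
    (hm : 1 ≤ m) (hL : 0 < L) (hLε : 2 * L ≤ ε) (hb : b = a + m * L)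
    (H : ∀ k : ℕ, k < m → ∃ i, x i ∈ Set.Icc (a + k * L) (a + (k + 1) * L)) :
    ((nbhdGraph n x ε).induce {i | x i ∈ Set.Icc a b}).Connected := by
  set S : Set (Fin n) := {i | x i ∈ Set.Icc a b} with hS
  have hsub : ∀ (k : ℕ), k < m → ∀ i : Fin n,
      x i ∈ Set.Icc (a + k * L) (a + (k + 1) * L) → i ∈ S := by
    intro k hk i hi
    obtain ⟨h1, h2⟩ := hi
    have hk0 : (0:ℝ) ≤ (k:ℝ) := Nat.cast_nonneg k
    have hk1 : ((k:ℝ) + 1) ≤ (m:ℝ) := by exact_mod_cast hk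
    constructor
    · nlinarith
    · rw [hb]; nlinarith
  choose rep hrep using fun k : Fin m => H k k.2
  have hrepS : ∀ k : Fin m, rep k ∈ S := fun k => hsub k k.2 _ (hrep k)
  have key : ∀ (u v : ↥S), |x u.1 - x v.1| ≤ ε →
      ((nbhdGraph n x ε).induce S).Reachable u v := by
    intro u v h
    by_cases he : u = v
    · exact he ▸ SimpleGraph.Reachable.refl u
    · exact SimpleGraph.Adj.reachable ⟨fun hh => he (Subtype.ext hh), h⟩
  have hstep : ∀ k l : Fin m, (l : ℕ) = (k : ℕ) + 1 →
      ((nbhdGraph n x ε).induce S).Reachable ⟨rep k, hrepS k⟩ ⟨rep l, hrepS l⟩ := by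
    intro k l hkl
    apply key
    have h1 := hrep k
    have h2 := hrep l
    rw [Set.mem_Icc] at h1 h2
    have hc : ((l : ℕ) : ℝ) = ((k : ℕ) : ℝ) + 1 := by exact_mod_cast hkl
    rw [hc] at h2
    rw [abs_sub_le_iff]
    constructor <;> nlinarith [h1.1, h1.2, h2.1, h2.2]
  have hreach : ∀ (d : ℕ) (k l : Fin m), (l : ℕ) = (k : ℕ) + d →
      ((nbhdGraph n x ε).induce S).Reachable ⟨rep k, hrepS k⟩ ⟨rep l, hrepS l⟩ := by
    intro d
    induction d with
    | zero =>
      intro k l h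
      have : l = k := Fin.ext (by omega)
      subst this
      exact SimpleGraph.Reachable.refl _
    | succ d ih =>
      intro k l h
      have hkd : (k : ℕ) + d < m := by omega
      exact (ih k ⟨(k : ℕ) + d, hkd⟩ rfl).trans (hstep ⟨(k : ℕ) + d, hkd⟩ l (by simp; omega))
  have idx : ∀ i : Fin n, i ∈ S →
      ∃ k : Fin m, x i ∈ Set.Icc (a + (k : ℕ) * L) (a + ((k : ℕ) + 1) * L) := by
    intro i hi
    have hia : a ≤ x i := hi.1
    have hib : x i ≤ a + m * L := hb ▸ hi.2
    have hnn : 0 ≤ (x i - a) / L := div_nonneg (by linarith) hL.le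
    by_cases hfl : Nat.floor ((x i - a) / L) < m
    · refine ⟨⟨_, hfl⟩, ?_, ?_⟩
      · have h1 : (Nat.floor ((x i - a) / L) : ℝ) ≤ (x i - a) / L := Nat.floor_le hnn
        have := (le_div_iff₀ hL).mp h1
        simp only
        linarith
      · have h2 : (x i - a) / L < Nat.floor ((x i - a) / L) + 1 := Nat.lt_floor_add_one _
        have := (div_lt_iff₀ hL).mp h2
        simp only
        linarith
    · have hge : (m : ℝ) ≤ (x i - a) / L := by
        have h3 : m ≤ Nat.floor ((x i - a) / L) := le_of_not_gt hfl
        exact (Nat.le_floor_iff hnn).mp h3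
      have hge' : (m : ℝ) * L ≤ x i - a := (le_div_iff₀ hL).mp hge
      have hm1 : (m - 1 : ℕ) < m := by omega
      have hcast : ((m - 1 : ℕ) : ℝ) = (m : ℝ) - 1 := by
        rw [Nat.cast_sub hm]; simp
      refine ⟨⟨m - 1, hm1⟩, ?_, ?_⟩
      · simp only [hcast]
        nlinarith
      · simp only [hcast]
        linarith
  rw [SimpleGraph.connected_iff]
  constructor
  · intro u v
    obtain ⟨ku, hku⟩ := idx u.1 u.2
    obtain ⟨kv, hkv⟩ := idx v.1 v.2
    have hLe : L ≤ ε := by linarith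
    have hu : ((nbhdGraph n x ε).induce S).Reachable u ⟨rep ku, hrepS ku⟩ := by
      apply key
      have h1 := hrep ku
      rw [Set.mem_Icc] at h1 hku
      rw [abs_sub_le_iff]
      constructor <;> linarith [h1.1, h1.2, hku.1, hku.2]
    have hv : ((nbhdGraph n x ε).induce S).Reachable v ⟨rep kv, hrepS kv⟩ := by
      apply key
      have h1 := hrep kv
      rw [Set.mem_Icc] at h1 hkv
      rw [abs_sub_le_iff]
      constructor <;> linarith [h1.1, h1.2, hkv.1, hkv.2]
    have hmid : ((nbhdGraph n x ε).induce S).Reachable ⟨rep ku, hrepS ku⟩ ⟨rep kv, hrepS kv⟩ := by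
      rcases le_total (ku : ℕ) (kv : ℕ) with h | h
      · exact hreach ((kv : ℕ) - (ku : ℕ)) ku kv (by omega)
      · exact (hreach ((ku : ℕ) - (kv : ℕ)) kv ku (by omega)).symm
    exact hu.trans (hmid.trans hv.symm)
  · exact ⟨⟨rep ⟨0, hm⟩, hrepS _⟩⟩

/-- Let `0 < r ≤ 1/4` and `X₁,…,Xₙ` i.i.d. uniform on `Q₁ ∪ Q₂`, and form the
neighborhood graph `G` with radius `ε = r/2`.  With probability at least
`1 - (8/r)·exp(-nr/8)`, the vertex sets `S₁ = {i : Xᵢ ∈ Q₁}` and `S₂ = {i : Xᵢ ∈ Q₂}` are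
nonempty, there are no edges between them, and each induces a connected subgraph of `G`;
i.e. `S₁` and `S₂` are exactly the connected components of `G`. -/
theorem cluster_graph_components
    (r : ℝ) (hr0 : 0 < r) (hr1 : r ≤ 1 / 4)
    (n : ℕ) (hn : 1 ≤ n)
    (Ω : Type*) [MeasurableSpace Ω] (P : Measure Ω) [IsProbabilityMeasure P]
    (X : Fin n → Ω → ℝ) (hXm : ∀ i, Measurable (X i))
    (hXindep : iIndepFun X P)
    (hXlaw : ∀ i, P.map (X i) = unifQ r) :
    1 - (8 / r) * Real.exp (-(n : ℝ) * r / 8)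
      ≤ (P {ω |
          ({i | X i ω ∈ Q1 r} : Set (Fin n)).Nonempty ∧
          ({i | X i ω ∈ Q2 r} : Set (Fin n)).Nonempty ∧
          (∀ i, X i ω ∈ Q1 r → ∀ j, X j ω ∈ Q2 r →
            ¬ (nbhdGraph n (fun l => X l ω) (r / 2)).Adj i j) ∧
          ((nbhdGraph n (fun l => X l ω) (r / 2)).induce {i | X i ω ∈ Q1 r}).Connected ∧
          ((nbhdGraph n (fun l => X l ω) (r / 2)).induce {i | X i ω ∈ Q2 r}).Connected}).toReal := by
  -- numeric setup
  have h2c : (0:ℝ) < 1 - 2*r := by linarith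
  set m : ℕ := ⌈(2 - 4*r)/r⌉₊ with hmdef
  have hm0 : 0 < m := Nat.ceil_pos.mpr (div_pos (by linarith) hr0)
  have hm0' : (0:ℝ) < (m:ℝ) := by exact_mod_cast hm0
  have hmlb : (2 - 4*r)/r ≤ (m:ℝ) := Nat.le_ceil _
  have hmub : (m:ℝ) ≤ 4/r := by
    have h1 : ((m:ℕ):ℝ) < (2 - 4*r)/r + 1 :=
      Nat.ceil_lt_add_one (le_of_lt (div_pos (by linarith) hr0))
    have h2 : (2 - 4*r)/r + 1 ≤ 4/r := by
      rw [le_div_iff₀ hr0, add_mul, div_mul_cancel₀ _ (ne_of_gt hr0)]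
      nlinarith
    linarith
  set L : ℝ := (1/2 - r)/(m:ℝ) with hLdef
  have hL : 0 < L := div_pos (by linarith) hm0'
  have hmL : (m:ℝ) * L = 1/2 - r := by
    rw [hLdef, mul_div_cancel₀]
    exact ne_of_gt hm0'
  have hLr : L ≤ r/4 := by
    have h1 : (2 - 4*r)/r ≤ (m:ℝ) := hmlb
    have h2 : (0:ℝ) < (2 - 4*r)/r := div_pos (by linarith) hr0
    have h3 : L ≤ (1/2 - r)/((2 - 4*r)/r) :=
      div_le_div_of_nonneg_left (by linarith) h2 h1
    have h4 : (1/2 - r)/((2 - 4*r)/r) = r/4 := by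
      rw [div_div_eq_mul_div, div_eq_div_iff (by linarith : (2 - 4*r) ≠ 0) (by norm_num : (4:ℝ) ≠ 0)]
      ring
    linarith
  have hLp : r/8 ≤ L/(1 - 2*r) := by
    have h1 : L/(1 - 2*r) = 1/(2*(m:ℝ)) := by
      rw [hLdef, div_div, div_eq_div_iff (mul_pos hm0' h2c).ne' (by positivity : (2*(m:ℝ)) ≠ 0)]
      ring
    rw [h1, div_le_div_iff₀ (by norm_num) (by positivity)]
    have : (m:ℝ)*r ≤ 4 := by
      rw [le_div_iff₀ hr0] at hmub
      linarith
    nlinarith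
  -- per-interval measure value
  have hval : ∀ (u v : ℝ), Set.Icc u v ⊆ Q1 r ∪ Q2 r →
      unifQ r (Set.Icc u v) = ENNReal.ofReal ((v - u)/(1 - 2*r)) := by
    intro u v hsub
    rw [unifQ, Measure.smul_apply, Measure.restrict_apply measurableSet_Icc,
        Set.inter_eq_left.mpr hsub, Real.volume_Icc, smul_eq_mul,
        ← ENNReal.ofReal_mul (le_of_lt (by positivity))]
    congr 1
    field_simp
  -- per-set miss probability
  have hB : ∀ J : Set ℝ, MeasurableSet J → ENNReal.ofReal (r/8) ≤ unifQ r J →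
      P (⋂ i, X i ⁻¹' Jᶜ) ≤ ENNReal.ofReal ((1 - r/8)^n) := by
    intro J hJ hJp
    have hprod : P (⋂ i, X i ⁻¹' Jᶜ) = ∏ i, P (X i ⁻¹' Jᶜ) :=
      hXindep.meas_iInter (fun i => ⟨Jᶜ, hJ.compl, rfl⟩)
    rw [hprod]
    have hle : ∀ i : Fin n, P (X i ⁻¹' Jᶜ) ≤ ENNReal.ofReal (1 - r/8) := by
      intro i
      have hmap : P (X i ⁻¹' J) = unifQ r J := by
        rw [← hXlaw i, Measure.map_apply (hXm i) hJ]
      have hcompl : P (X i ⁻¹' Jᶜ) = 1 - P (X i ⁻¹' J) := by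
        rw [Set.preimage_compl, prob_compl_eq_one_sub (hJ.preimage (hXm i))]
      rw [hcompl, hmap]
      calc 1 - unifQ r J ≤ 1 - ENNReal.ofReal (r/8) := tsub_le_tsub_left hJp 1
        _ = ENNReal.ofReal (1 - r/8) := by
            rw [← ENNReal.ofReal_one, ← ENNReal.ofReal_sub _ (by positivity)]
    calc ∏ i, P (X i ⁻¹' Jᶜ) ≤ ∏ _i : Fin n, ENNReal.ofReal (1 - r/8) :=
          Finset.prod_le_prod' (fun i _ => hle i)
      _ = ENNReal.ofReal (1 - r/8) ^ n := by simp
      _ = ENNReal.ofReal ((1 - r/8)^n) := (ENNReal.ofReal_pow (by linarith) n).symm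
  -- the two families of intervals
  have hsub1 : ∀ k : ℕ, k < m →
      Set.Icc ((0:ℝ) + k*L) (0 + (k+1)*L) ⊆ Q1 r := by
    intro k hk
    have hk1 : ((k:ℝ) + 1) ≤ (m:ℝ) := by exact_mod_cast hk
    apply Set.Icc_subset_Icc
    · positivity
    · nlinarith
  have hsub2 : ∀ k : ℕ, k < m →
      Set.Icc ((1/2 + r) + k*L) ((1/2 + r) + (k+1)*L) ⊆ Q2 r := by
    intro k hk
    have hk1 : ((k:ℝ) + 1) ≤ (m:ℝ) := by exact_mod_cast hk
    apply Set.Icc_subset_Icc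
    · have : (0:ℝ) ≤ (k:ℝ)*L := by positivity
      linarith
    · nlinarith
  have hmeas1 : ∀ (a' : ℝ) (k : ℕ),
      ENNReal.ofReal (r/8) ≤ unifQ r (Set.Icc (a' + k*L) (a' + (k+1)*L)) →
      True := fun _ _ _ => trivial
  -- interval measure lower bound
  have hIval : ∀ (a' : ℝ) (k : ℕ), Set.Icc (a' + k*L) (a' + (k+1)*L) ⊆ Q1 r ∪ Q2 r →
      ENNReal.ofReal (r/8) ≤ unifQ r (Set.Icc (a' + k*L) (a' + (k+1)*L)) := by
    intro a' k hsub
    rw [hval _ _ hsub]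
    apply ENNReal.ofReal_le_ofReal
    have : (a' + (k+1)*L) - (a' + k*L) = L := by ring
    rw [this]
    exact hLp
  -- the good event
  set E1 : Set Ω := ⋂ k ∈ Finset.range m, ⋃ i, X i ⁻¹' Set.Icc ((0:ℝ) + k*L) (0 + (k+1)*L)
    with hE1def
  set E2 : Set Ω := ⋂ k ∈ Finset.range m,
      ⋃ i, X i ⁻¹' Set.Icc ((1/2 + r) + k*L) ((1/2 + r) + (k+1)*L) with hE2def
  have hmE1 : MeasurableSet E1 := by
    apply MeasurableSet.biInter (Finset.range m).countable_toSet
    intro k _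
    exact MeasurableSet.iUnion fun i => (hXm i) measurableSet_Icc
  have hmE2 : MeasurableSet E2 := by
    apply MeasurableSet.biInter (Finset.range m).countable_toSet
    intro k _
    exact MeasurableSet.iUnion fun i => (hXm i) measurableSet_Icc
  -- complement bounds
  have hcompl : ∀ (a' : ℝ) (k : ℕ),
      (⋃ i, X i ⁻¹' Set.Icc (a' + k*L) (a' + (k+1)*L))ᶜ
        = ⋂ i, X i ⁻¹' (Set.Icc (a' + k*L) (a' + (k+1)*L))ᶜ := by
    intro a' k
    rw [Set.compl_iUnion]
    simp [Set.preimage_compl]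
  have hbadE1 : P E1ᶜ ≤ (m : ENNReal) * ENNReal.ofReal ((1 - r/8)^n) := by
    rw [hE1def, Set.compl_iInter₂]
    refine le_trans (measure_biUnion_finset_le _ _) ?_
    calc ∑ k ∈ Finset.range m,
          P (⋃ i, X i ⁻¹' Set.Icc ((0:ℝ) + k*L) (0 + (k+1)*L))ᶜ
        ≤ ∑ _k ∈ Finset.range m, ENNReal.ofReal ((1 - r/8)^n) := by
          apply Finset.sum_le_sum
          intro k hk
          rw [hcompl]
          exact hB _ measurableSet_Icc
            (hIval _ _ (fun y hy => Or.inl (hsub1 k (Finset.mem_range.mp hk) hy)))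
      _ = (m : ENNReal) * ENNReal.ofReal ((1 - r/8)^n) := by
          rw [Finset.sum_const, Finset.card_range, nsmul_eq_mul]
  have hbadE2 : P E2ᶜ ≤ (m : ENNReal) * ENNReal.ofReal ((1 - r/8)^n) := by
    rw [hE2def, Set.compl_iInter₂]
    refine le_trans (measure_biUnion_finset_le _ _) ?_
    calc ∑ k ∈ Finset.range m,
          P (⋃ i, X i ⁻¹' Set.Icc ((1/2 + r) + k*L) ((1/2 + r) + (k+1)*L))ᶜ
        ≤ ∑ _k ∈ Finset.range m, ENNReal.ofReal ((1 - r/8)^n) := by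
          apply Finset.sum_le_sum
          intro k hk
          rw [hcompl]
          exact hB _ measurableSet_Icc
            (hIval _ _ (fun y hy => Or.inr (hsub2 k (Finset.mem_range.mp hk) hy)))
      _ = (m : ENNReal) * ENNReal.ofReal ((1 - r/8)^n) := by
          rw [Finset.sum_const, Finset.card_range, nsmul_eq_mul]
  have hbad : P (E1 ∩ E2)ᶜ ≤ ENNReal.ofReal ((8/r) * Real.exp (-(n:ℝ)*r/8)) := by
    rw [Set.compl_inter]
    refine le_trans (measure_union_le _ _) ?_
    refine le_trans (add_le_add hbadE1 hbadE2) ?_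
    have hc1 : (m : ENNReal) * ENNReal.ofReal ((1 - r/8)^n)
        + (m : ENNReal) * ENNReal.ofReal ((1 - r/8)^n)
        = ENNReal.ofReal ((2*m) * (1 - r/8)^n) := by
      rw [← two_mul, ← mul_assoc]
      have : (2 : ENNReal) * (m : ENNReal) = ENNReal.ofReal (2*(m:ℝ)) := by
        rw [ENNReal.ofReal_mul (by norm_num), ENNReal.ofReal_natCast]
        norm_num
      rw [this, ← ENNReal.ofReal_mul (by positivity)]
    rw [hc1]
    apply ENNReal.ofReal_le_ofReal
    have hq : (1 - r/8)^n ≤ Real.exp (-(n:ℝ)*r/8) := by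
      have h1 : (1 : ℝ) - r/8 ≤ Real.exp (-(r/8)) := by
        have := Real.add_one_le_exp (-(r/8))
        linarith
      have h2 : ((1:ℝ) - r/8)^n ≤ (Real.exp (-(r/8)))^n :=
        pow_le_pow_left₀ (by linarith) h1 n
      rw [← Real.exp_nat_mul] at h2
      have h3 : (n:ℝ) * -(r/8) = -(n:ℝ)*r/8 := by ring
      rw [h3] at h2
      exact h2
    have h2m : 2*(m:ℝ) ≤ 8/r := by
      rw [le_div_iff₀ hr0] at hmub ⊢
      linarith
    apply mul_le_mul h2m hq (pow_nonneg (by linarith) n) (by positivity)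
  -- from good event to conclusion
  have hdet : E1 ∩ E2 ⊆ {ω |
          ({i | X i ω ∈ Q1 r} : Set (Fin n)).Nonempty ∧
          ({i | X i ω ∈ Q2 r} : Set (Fin n)).Nonempty ∧
          (∀ i, X i ω ∈ Q1 r → ∀ j, X j ω ∈ Q2 r →
            ¬ (nbhdGraph n (fun l => X l ω) (r / 2)).Adj i j) ∧
          ((nbhdGraph n (fun l => X l ω) (r / 2)).induce {i | X i ω ∈ Q1 r}).Connected ∧
          ((nbhdGraph n (fun l => X l ω) (r / 2)).induce {i | X i ω ∈ Q2 r}).Connected} := by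
    intro ω hω
    obtain ⟨hω1, hω2⟩ := hω
    rw [hE1def, Set.mem_iInter₂] at hω1
    rw [hE2def, Set.mem_iInter₂] at hω2
    have hits1 : ∀ k : ℕ, k < m → ∃ i, X i ω ∈ Set.Icc ((0:ℝ) + k*L) (0 + (k+1)*L) := by
      intro k hk
      have := hω1 k (Finset.mem_range.mpr hk)
      simpa using this
    have hits2 : ∀ k : ℕ, k < m →
        ∃ i, X i ω ∈ Set.Icc ((1/2 + r) + k*L) ((1/2 + r) + (k+1)*L) := by
      intro k hk
      have := hω2 k (Finset.mem_range.mpr hk)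
      simpa using this
    refine ⟨?_, ?_, ?_, ?_, ?_⟩
    · obtain ⟨i, hi⟩ := hits1 0 hm0
      exact ⟨i, hsub1 0 hm0 hi⟩
    · obtain ⟨i, hi⟩ := hits2 0 hm0
      exact ⟨i, hsub2 0 hm0 hi⟩
    · intro i hi j hj hadj
      obtain ⟨_, habs⟩ := hadj
      have h1 : X i ω ≤ 1/2 - r := hi.2
      have h2 : 1/2 + r ≤ X j ω := hj.1
      have h3 : X j ω - X i ω ≤ |X i ω - X j ω| := by
        rw [abs_sub_comm]
        exact le_abs_self _
      linarith
    · have : Q1 r = Set.Icc (0:ℝ) (0 + m*L) := by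
        rw [Q1, hmL]
        norm_num
      rw [show {i | X i ω ∈ Q1 r} = {i | X i ω ∈ Set.Icc (0:ℝ) (0 + m*L)} by rw [← this]]
      exact connected_of_hits n (fun l => X l ω) (r/2) 0 (0 + m*L) L m hm0 hL
        (by linarith) rfl hits1
    · have : Q2 r = Set.Icc (1/2 + r) ((1/2 + r) + m*L) := by
        rw [Q2, hmL]
        norm_num
      rw [show {i | X i ω ∈ Q2 r} = {i | X i ω ∈ Set.Icc (1/2 + r) ((1/2 + r) + m*L)}
        by rw [← this]]
      exact connected_of_hits n (fun l => X l ω) (r/2) (1/2 + r) ((1/2 + r) + m*L) L m hm0 hL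
        (by linarith) rfl hits2
  -- conclude
  have hE : MeasurableSet (E1 ∩ E2) := hmE1.inter hmE2
  have hmono : P (E1 ∩ E2) ≤ P _ := measure_mono hdet
  have htr : (P (E1 ∩ E2)).toReal ≤ (P {ω |
          ({i | X i ω ∈ Q1 r} : Set (Fin n)).Nonempty ∧
          ({i | X i ω ∈ Q2 r} : Set (Fin n)).Nonempty ∧
          (∀ i, X i ω ∈ Q1 r → ∀ j, X j ω ∈ Q2 r →
            ¬ (nbhdGraph n (fun l => X l ω) (r / 2)).Adj i j) ∧
          ((nbhdGraph n (fun l => X l ω) (r / 2)).induce {i | X i ω ∈ Q1 r}).Connected ∧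
          ((nbhdGraph n (fun l => X l ω) (r / 2)).induce {i | X i ω ∈ Q2 r}).Connected}).toReal :=
    ENNReal.toReal_mono (measure_ne_top P _) hmono
  have hcval : (P (E1 ∩ E2)).toReal = 1 - (P (E1 ∩ E2)ᶜ).toReal := by
    rw [prob_compl_eq_one_sub hE, ENNReal.toReal_sub_of_le prob_le_one ENNReal.one_ne_top]
    simp
  have hbadr : (P (E1 ∩ E2)ᶜ).toReal ≤ (8/r) * Real.exp (-(n:ℝ)*r/8) :=
    ENNReal.toReal_le_of_le_ofReal (by positivity) hbad
  linarith [htr, hcval, hbadr]
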